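/- arXiv:0907.0314 — 4 statements merged into one kernel-verified Lean document; each statement's English description precedes it below -/
import Mathlib

section
/- Let A = [[a,b],[c,d]] ∈ M₂(ℝ̄) be a nonzero matrix. If both columns of A are nonzero, then PC(A) is the closed interval in ℝ̂ with endpoints c − a and d − b (computed by the extended subtraction), i.e. PC(A) = {z ∈ ℝ̂ : min(c−a, d−b) ≤ z ≤ max(c−a, d−b)}. If the first column of A is zero then PC(A) = {d − b}, and if the second column is zero then PC(A) = {c − a}. In particular, PC(A) is always a closed convex subset of ℝ̂. -/
open scoped Classical ENNReal

/-- The tropical semiring `ℝ̄ = ℝ ∪ {-∞}`, carried by `WithBot ℝ`;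
tropical addition is `max` and tropical multiplication is `+`. -/
abbrev Rb : Type := WithBot ℝ

/-- Tropical matrix multiplication. -/
noncomputable def tMul {n : ℕ} (A B : Fin n → Fin n → Rb) : Fin n → Fin n → Rb :=
  fun i j => Finset.univ.sup fun k => A i k + B k j

/-- The column space of a matrix: all tropical linear combinations of its columns. -/
def ColSpace {n : ℕ} (A : Fin n → Fin n → Rb) : Set (Fin n → Rb) :=
  {v | ∃ c : Fin n → Rb, ∀ i, v i = Finset.univ.sup fun j => c j + A i j}

/-- The row space of a matrix: all tropical linear combinations of its rows. -/
def RowSpace {n : ℕ} (A : Fin n → Fin n → Rb) : Set (Fin n → Rb) :=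
  {v | ∃ c : Fin n → Rb, ∀ j, v j = Finset.univ.sup fun i => c i + A i j}

abbrev Mat2 : Type := Fin 2 → Fin 2 → Rb

/-- Inclusion of `ℝ̄` into the projective line `ℝ̂ = ℝ ∪ {-∞, +∞}` (modelled by `EReal`). -/
noncomputable def toE : Rb → EReal := WithBot.recBotCoe ⊥ (fun r : ℝ => (r : EReal))

/-- Projection of a vector `(a, b)` to `b - a ∈ ℝ̂`. -/
noncomputable def projPt (v : Fin 2 → Rb) : EReal := toE (v 1) - toE (v 0)

def zeroVec : Fin 2 → Rb := fun _ => ⊥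

/-- Projective column space. -/
noncomputable def PC (A : Mat2) : Set EReal :=
  {z | ∃ v ∈ ColSpace A, v ≠ zeroVec ∧ projPt v = z}

/-- Projective row space. -/
noncomputable def PR (A : Mat2) : Set EReal :=
  {z | ∃ v ∈ RowSpace A, v ≠ zeroVec ∧ projPt v = z}

/-- The metric `δ` on `ℝ̂`. -/
noncomputable def delta (x y : EReal) : ℝ≥0∞ :=
  if (∃ a : ℝ, x = (a : EReal)) ∧ (∃ b : ℝ, y = (b : EReal)) then
    ENNReal.ofReal |x.toReal - y.toReal|
  else if x = y then 0 else ⊤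

/-- `M` embeds isometrically into `N`. -/
def IsomEmbed (M N : Set EReal) : Prop :=
  ∃ f : EReal → EReal, Set.MapsTo f M N ∧ Set.InjOn f M ∧
    ∀ x ∈ M, ∀ y ∈ M, delta (f x) (f y) = delta x y

/-- `M` and `N` are isometric. -/
def Isom (M N : Set EReal) : Prop :=
  ∃ f : EReal → EReal, Set.BijOn f M N ∧
    ∀ x ∈ M, ∀ y ∈ M, delta (f x) (f y) = delta x y

/-- Closed convex subsets of `ℝ̂`: the empty set, singletons and closed intervals. -/
def IsClosedConvex (S : Set EReal) : Prop :=
  S = ∅ ∨ ∃ x y : EReal, x ≤ y ∧ S = Set.Icc x y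

/-!
The projection `(p, q) ↦ q - p` is invariant under tropical scaling, and the projection of a
tropical sum `v ⊕ w` lies between the projections of `v` and `w`: if `p₁ ≥ p₂` then
`(q₁ ⊔ q₂) - (p₁ ⊔ p₂) ≥ q₁ - p₁`, and symmetrically for the upper bound. Hence `PC(A)` lies
between the projections `c - a` and `d - b` of the two columns, which are attained by the
columns themselves. Conversely, a point `z` strictly between them is real, forces `a` and `d`
to be real, and is the projection of `(0, z) = (-a) ⊗ (a, c) ⊕ (z - d) ⊗ (b, d)`.
-/

@[simp] lemma toE_bot : toE ⊥ = ⊥ := rfl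

@[simp] lemma toE_coe (r : ℝ) : toE (r : Rb) = (r : EReal) := rfl

@[simp] lemma toE_zero : toE 0 = 0 := rfl

@[simp] lemma toE_eq_bot_iff {x : Rb} : toE x = ⊥ ↔ x = ⊥ := by
  cases x using WithBot.recBotCoe <;> simp

lemma toE_add (x y : Rb) : toE (x + y) = toE x + toE y := by
  cases x using WithBot.recBotCoe <;> cases y using WithBot.recBotCoe <;> simp [← WithBot.coe_add]

lemma toE_strictMono : StrictMono toE := by
  intro x y h
  cases x using WithBot.recBotCoe <;> cases y using WithBot.recBotCoe <;> simp_all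

lemma toE_sup (x y : Rb) : toE (x ⊔ y) = toE x ⊔ toE y :=
  toE_strictMono.monotone.map_sup x y

namespace EReal

lemma min_sub_le_sup_sub_sup (p₁ q₁ p₂ q₂ : EReal) :
    min (q₁ - p₁) (q₂ - p₂) ≤ (q₁ ⊔ q₂) - (p₁ ⊔ p₂) := by
  rcases le_total p₂ p₁ with h | h
  · rw [sup_eq_left.2 h]
    exact (min_le_left _ _).trans (sub_le_sub le_sup_left le_rfl)
  · rw [sup_eq_right.2 h]
    exact (min_le_right _ _).trans (sub_le_sub le_sup_right le_rfl)

lemma sup_sub_sup_le_max_sub (p₁ q₁ p₂ q₂ : EReal) :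
    (q₁ ⊔ q₂) - (p₁ ⊔ p₂) ≤ max (q₁ - p₁) (q₂ - p₂) := by
  rcases le_total q₂ q₁ with h | h
  · rw [sup_eq_left.2 h]
    exact (sub_le_sub le_rfl le_sup_left).trans (le_max_left _ _)
  · rw [sup_eq_right.2 h]
    exact (sub_le_sub le_rfl le_sup_right).trans (le_max_right _ _)

lemma coe_add_sub_coe_add (r : ℝ) (p q : EReal) : (r + q) - (r + p) = q - p := by
  rw [add_sub_add_comm (.inl (coe_ne_bot r)) (.inl (coe_ne_top r)), ← coe_sub]
  simp

end EReal

lemma toE_add_sub_toE_add {r : Rb} (hr : r ≠ ⊥) (p q : Rb) :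
    toE (r + q) - toE (r + p) = toE q - toE p := by
  lift r to ℝ using hr
  simp only [toE_add, toE_coe, EReal.coe_add_sub_coe_add]

lemma mem_PC_iff {a b c d z} : z ∈ PC ![![a, b], ![c, d]] ↔ ∃ x y : Rb,
    ¬((x + a) ⊔ (y + b) = ⊥ ∧ (x + c) ⊔ (y + d) = ⊥) ∧
      toE ((x + c) ⊔ (y + d)) - toE ((x + a) ⊔ (y + b)) = z := by
  have hsup (f : Fin 2 → Rb) : Finset.univ.sup f = f 0 ⊔ f 1 := by
    simp [Fin.univ_succ]
  have hzero (v : Fin 2 → Rb) : v = zeroVec ↔ v 0 = ⊥ ∧ v 1 = ⊥ := by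
    simp [funext_iff, Fin.forall_fin_two, zeroVec]
  simp only [PC, ColSpace, projPt, hsup, ne_eq, hzero, Fin.forall_fin_two]
  constructor
  · rintro ⟨v, ⟨x, hv0, hv1⟩, hnz, rfl⟩
    exact ⟨x 0, x 1, by simpa [hv0, hv1] using hnz, by simp [hv0, hv1]⟩
  · rintro ⟨x, y, hnz, rfl⟩
    exact ⟨![(x + a) ⊔ (y + b), (x + c) ⊔ (y + d)], ⟨![x, y], by simp, by simp⟩, by simpa using hnz,
      by simp⟩

lemma PC_swap (a b c d : Rb) : PC ![![a, b], ![c, d]] = PC ![![b, a], ![d, c]] := by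
  ext z
  simp only [mem_PC_iff]
  constructor <;>
  · rintro ⟨x, y, h⟩
    exact ⟨y, x, by simpa only [sup_comm] using h⟩

lemma PC_subset_Icc (a b c d : Rb) :
    PC ![![a, b], ![c, d]] ⊆
      Set.Icc (min (toE c - toE a) (toE d - toE b)) (max (toE c - toE a) (toE d - toE b)) := by
  intro z hz
  obtain ⟨x, y, hnz, rfl⟩ := mem_PC_iff.1 hz
  rcases eq_or_ne x ⊥ with rfl | hx
  · have hy : y ≠ ⊥ := by rintro rfl; simp at hnz
    simp only [WithBot.bot_add, bot_sup_eq, toE_add_sub_toE_add hy]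
    exact ⟨min_le_right _ _, le_max_right _ _⟩
  rcases eq_or_ne y ⊥ with rfl | hy
  · simp only [WithBot.bot_add, sup_bot_eq, toE_add_sub_toE_add hx]
    exact ⟨min_le_left _ _, le_max_left _ _⟩
  have hmin := EReal.min_sub_le_sup_sub_sup (toE (x + a)) (toE (x + c)) (toE (y + b)) (toE (y + d))
  have hmax := EReal.sup_sub_sup_le_max_sub (toE (x + a)) (toE (x + c)) (toE (y + b)) (toE (y + d))
  simp only [toE_add_sub_toE_add hx, toE_add_sub_toE_add hy, ← toE_sup] at hmin hmax
  exact ⟨hmin, hmax⟩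

lemma sub_mem_PC {a c : Rb} (hu : ¬(a = ⊥ ∧ c = ⊥)) (b d : Rb) :
    toE c - toE a ∈ PC ![![a, b], ![c, d]] :=
  mem_PC_iff.2 ⟨0, ⊥, by simpa using hu, by simp⟩

lemma PC_eq_singleton_of_first_col_bot {b d : Rb} (hw : ¬(b = ⊥ ∧ d = ⊥)) :
    PC ![![⊥, b], ![⊥, d]] = {toE d - toE b} := by
  refine Set.Subset.antisymm (fun z hz => ?_) (Set.singleton_subset_iff.2 ?_)
  · obtain ⟨x, y, hnz, rfl⟩ := mem_PC_iff.1 hz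
    have hy : y ≠ ⊥ := by rintro rfl; simp at hnz
    simp [toE_add_sub_toE_add hy]
  · rw [PC_swap]
    exact sub_mem_PC hw _ _

lemma mem_PC_of_lt_of_lt {a b c d : Rb} {z : EReal} (hu : ¬(a = ⊥ ∧ c = ⊥))
    (h₁ : toE c - toE a < z) (h₂ : z < toE d - toE b) : z ∈ PC ![![a, b], ![c, d]] := by
  have ha : a ≠ ⊥ := by
    rintro rfl
    have hc : toE c ≠ ⊥ := by simpa using hu
    simp [EReal.sub_bot hc] at h₁
  have hd : d ≠ ⊥ := by rintro rfl; simp at h₂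
  lift a to ℝ using ha with A
  lift d to ℝ using hd with D
  lift z to ℝ using ⟨h₂.trans_le le_top |>.ne, h₁.trans_le' bot_le |>.ne'⟩ with r
  have hc : (-A : ℝ) + c ≤ (r : Rb) := by
    cases c using WithBot.recBotCoe
    · simp
    · simp only [toE_coe, ← EReal.coe_sub, EReal.coe_lt_coe_iff] at h₁
      exact_mod_cast (by linarith : -A + _ ≤ r)
  have hb : ((r - D : ℝ) : Rb) + b ≤ 0 := by
    cases b using WithBot.recBotCoe
    · simp
    · simp only [toE_coe, ← EReal.coe_sub, EReal.coe_lt_coe_iff] at h₂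
      exact_mod_cast (by linarith : r - D + _ ≤ 0)
  have hv₀ : (((-A : ℝ) : Rb) + A) ⊔ (((r - D : ℝ) : Rb) + b) = 0 := by
    rw [← WithBot.coe_add, neg_add_cancel, WithBot.coe_zero, sup_eq_left.2 hb]
  have hv₁ : (((-A : ℝ) : Rb) + c) ⊔ (((r - D : ℝ) : Rb) + D) = r := by
    rw [← WithBot.coe_add, sub_add_cancel, sup_eq_right.2 hc]
  exact mem_PC_iff.2 ⟨(-A : ℝ), (r - D : ℝ), by simp [hv₀], by simp [hv₀, hv₁]⟩

lemma Icc_subset_PC {a b c d : Rb} (hu : ¬(a = ⊥ ∧ c = ⊥)) (hw : ¬(b = ⊥ ∧ d = ⊥)) :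
    Set.Icc (min (toE c - toE a) (toE d - toE b)) (max (toE c - toE a) (toE d - toE b)) ⊆
      PC ![![a, b], ![c, d]] := by
  wlog h : toE c - toE a ≤ toE d - toE b generalizing a b c d
  · rw [PC_swap, min_comm, max_comm]
    exact this hw hu (le_of_not_ge h)
  rw [min_eq_left h, max_eq_right h]
  rintro z ⟨h₁, h₂⟩
  rcases h₁.eq_or_lt with rfl | h₁
  · exact sub_mem_PC hu b d
  rcases h₂.eq_or_lt with rfl | h₂
  · rw [PC_swap]
    exact sub_mem_PC hw a c
  exact mem_PC_of_lt_of_lt hu h₁ h₂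

/-- description of the projective column space of a nonzero `2 × 2`
tropical matrix `[[a,b],[c,d]]`, and the fact that it is always a closed convex set. -/
theorem projective_column_space_description (a b c d : Rb)
    (hA : ¬(a = ⊥ ∧ b = ⊥ ∧ c = ⊥ ∧ d = ⊥)) :
    ((¬(a = ⊥ ∧ c = ⊥) ∧ ¬(b = ⊥ ∧ d = ⊥)) →
        PC ![![a, b], ![c, d]] =
          {z : EReal | min (toE c - toE a) (toE d - toE b) ≤ z ∧
            z ≤ max (toE c - toE a) (toE d - toE b)}) ∧
    ((a = ⊥ ∧ c = ⊥) → PC ![![a, b], ![c, d]] = {toE d - toE b}) ∧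
    ((b = ⊥ ∧ d = ⊥) → PC ![![a, b], ![c, d]] = {toE c - toE a}) ∧
    IsClosedConvex (PC ![![a, b], ![c, d]]) := by
  have interval (h : ¬(a = ⊥ ∧ c = ⊥) ∧ ¬(b = ⊥ ∧ d = ⊥)) :
      PC ![![a, b], ![c, d]] = Set.Icc (min (toE c - toE a) (toE d - toE b))
        (max (toE c - toE a) (toE d - toE b)) :=
    (PC_subset_Icc a b c d).antisymm (Icc_subset_PC h.1 h.2)
  have first_bot : a = ⊥ ∧ c = ⊥ → PC ![![a, b], ![c, d]] = {toE d - toE b} := by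
    rintro ⟨rfl, rfl⟩
    exact PC_eq_singleton_of_first_col_bot fun h => hA ⟨rfl, h.1, rfl, h.2⟩
  have second_bot : b = ⊥ ∧ d = ⊥ → PC ![![a, b], ![c, d]] = {toE c - toE a} := by
    rintro ⟨rfl, rfl⟩
    rw [PC_swap]
    exact PC_eq_singleton_of_first_col_bot fun h => hA ⟨h.1, rfl, h.2, rfl⟩
  refine ⟨interval, first_bot, second_bot, .inr ?_⟩
  by_cases h₁ : a = ⊥ ∧ c = ⊥
  · exact ⟨_, _, le_rfl, by rw [first_bot h₁, Set.Icc_self]⟩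
  by_cases h₂ : b = ⊥ ∧ d = ⊥
  · exact ⟨_, _, le_rfl, by rw [second_bot h₂, Set.Icc_self]⟩
  exact ⟨_, _, min_le_max, interval ⟨h₁, h₂⟩⟩
end

section
/- For every matrix A ∈ M₂(ℝ̄), the projective column space PC(A) and the projective row space PR(A) are isometric subsets of ℝ̂ with respect to the metric δ. -/
open scoped Classical ENNReal

lemma sup_fin2 (f : Fin 2 → Rb) : Finset.univ.sup f = f 0 ⊔ f 1 := by
  have : (Finset.univ : Finset (Fin 2)) = {0, 1} := by decide
  rw [this, Finset.sup_insert, Finset.sup_singleton]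

lemma sup_addr (x y : Rb) (r : ℝ) : (x ⊔ y) + (r : Rb) = (x + r) ⊔ (y + r) := by
  induction x using WithBot.recBotCoe <;> induction y using WithBot.recBotCoe <;>
    simp [← WithBot.coe_add, max_def] <;> split <;> simp_all

lemma addr_assoc (x : Rb) (r s : ℝ) : (x + (r:Rb)) + (s:Rb) = x + ((r+s:ℝ):Rb) := by
  induction x using WithBot.recBotCoe <;> simp [← WithBot.coe_add]; ring

lemma E1 (X Y : Rb) (r : ℝ) : toE (X + (r:Rb)) - toE Y = (toE X - toE Y) + (r : EReal) := by
  induction X using WithBot.recBotCoe <;> induction Y using WithBot.recBotCoe <;>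
    simp [← WithBot.coe_add, ← EReal.coe_add, ← EReal.coe_sub, sub_eq_add_neg]
  · norm_cast; ring

lemma E2 (X Y : Rb) (r : ℝ) (h : X ≠ ⊥ ∨ Y ≠ ⊥) :
    toE (X + (r:Rb)) - toE Y = (r : EReal) - (toE Y - toE X) := by
  induction X using WithBot.recBotCoe <;> induction Y using WithBot.recBotCoe <;>
    simp_all [← WithBot.coe_add, ← EReal.coe_add, ← EReal.coe_sub, sub_eq_add_neg]
  · norm_cast; ring

lemma E0 (X Y : Rb) (r : ℝ) : toE ((r:Rb) + X) - toE ((r:Rb) + Y) = toE X - toE Y := by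
  induction X using WithBot.recBotCoe <;> induction Y using WithBot.recBotCoe <;>
    simp [← WithBot.coe_add, ← EReal.coe_sub, sub_eq_add_neg, ← EReal.coe_add]
  · norm_cast; ring

lemma E3 (X : Rb) (h : X ≠ ⊥) : toE X - toE ⊥ = ⊤ := by
  induction X using WithBot.recBotCoe <;> simp_all [sub_eq_add_neg]

lemma E4 (X : Rb) : toE ⊥ - toE X = ⊥ := by
  induction X using WithBot.recBotCoe <;> simp [sub_eq_add_neg]

lemma delta_self (x : EReal) : delta x x = 0 := by
  unfold delta; split
  · simp
  · simp

lemma delta_addr (x y : EReal) (r : ℝ) : delta (x + r) (y + r) = delta x y := by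
  unfold delta
  induction x using EReal.rec <;> induction y using EReal.rec <;>
    simp [← EReal.coe_add]

lemma delta_subr (x y : EReal) (r : ℝ) : delta ((r:EReal) - x) ((r:EReal) - y) = delta x y := by
  unfold delta
  induction x using EReal.rec <;> induction y using EReal.rec <;>
    simp [← EReal.coe_sub]
  exact abs_sub_comm _ _

lemma inv_addr (r : ℝ) (x : EReal) : (x + (r:EReal)) + ((-r : ℝ):EReal) = x := by
  induction x using EReal.rec <;> simp [← EReal.coe_add] <;> norm_cast <;> ring

lemma inv_subr (r : ℝ) (x : EReal) : (r:EReal) - ((r:EReal) - x) = x := by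
  induction x using EReal.rec <;> simp [← EReal.coe_sub, sub_eq_add_neg] <;> norm_cast <;> ring

lemma ne_zero_iff (v : Fin 2 → Rb) : v ≠ zeroVec ↔ (v 0 ≠ ⊥ ∨ v 1 ≠ ⊥) := by
  rw [← not_and_or, not_iff_not]
  constructor
  · rintro rfl; exact ⟨rfl, rfl⟩
  · rintro ⟨h0, h1⟩; funext i; fin_cases i <;> assumption

lemma mem_ColSpace (A : Mat2) (v : Fin 2 → Rb) :
    v ∈ ColSpace A ↔ ∃ l m : Rb,
      v 0 = (l + A 0 0) ⊔ (m + A 0 1) ∧ v 1 = (l + A 1 0) ⊔ (m + A 1 1) := by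
  constructor
  · rintro ⟨c, h⟩
    exact ⟨c 0, c 1, by rw [h 0, sup_fin2], by rw [h 1, sup_fin2]⟩
  · rintro ⟨l, m, h0, h1⟩
    refine ⟨![l, m], fun i => ?_⟩
    rw [sup_fin2]; fin_cases i <;> simpa

lemma mem_RowSpace (A : Mat2) (v : Fin 2 → Rb) :
    v ∈ RowSpace A ↔ ∃ l m : Rb,
      v 0 = (l + A 0 0) ⊔ (m + A 1 0) ∧ v 1 = (l + A 0 1) ⊔ (m + A 1 1) := by
  constructor
  · rintro ⟨c, h⟩
    exact ⟨c 0, c 1, by rw [h 0, sup_fin2], by rw [h 1, sup_fin2]⟩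
  · rintro ⟨l, m, h0, h1⟩
    refine ⟨![l, m], fun j => ?_⟩
    rw [sup_fin2]; fin_cases j <;> simpa

def At (A : Mat2) : Mat2 := fun i j => A j i

lemma PC_At (A : Mat2) : PC (At A) = PR A := rfl
lemma PR_At (A : Mat2) : PR (At A) = PC A := rfl

lemma mapsTo_trans (A : Mat2) (b c : ℝ) (hb : A 0 1 = (b:Rb)) (hc : A 1 0 = (c:Rb)) :
    Set.MapsTo (fun z => z + ((b - c : ℝ) : EReal)) (PC A) (PR A) := by
  rintro z ⟨v, hv, hvz, rfl⟩
  obtain ⟨l, m, h0, h1⟩ := (mem_ColSpace A v).1 hv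
  refine ⟨![v 0, v 1 + ((b - c : ℝ):Rb)], ?_, ?_, ?_⟩
  · rw [mem_RowSpace]
    refine ⟨l, m + ((b - c : ℝ):Rb), ?_, ?_⟩
    · simp only [Matrix.cons_val_zero, h0, hb, hc, addr_assoc]
      norm_num
    · simp only [Matrix.cons_val_one, Matrix.head_cons, h1, hb, hc, sup_addr, addr_assoc]
      rw [add_right_comm m ((b-c:ℝ):Rb) (A 1 1)]
      norm_num
  · rw [ne_zero_iff] at hvz ⊢
    simpa [WithBot.add_eq_bot] using hvz
  · show toE (v 1 + _) - toE (v 0) = _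
    rw [E1]; rfl

lemma mapsTo_refl (A : Mat2) (a d : ℝ) (ha : A 0 0 = (a:Rb)) (hd : A 1 1 = (d:Rb)) :
    Set.MapsTo (fun z => ((d - a : ℝ) : EReal) - z) (PC A) (PR A) := by
  rintro z ⟨v, hv, hvz, rfl⟩
  obtain ⟨l, m, h0, h1⟩ := (mem_ColSpace A v).1 hv
  refine ⟨![v 1, v 0 + ((d - a : ℝ):Rb)], ?_, ?_, ?_⟩
  · rw [mem_RowSpace]
    refine ⟨m + ((d - a : ℝ):Rb), l, ?_, ?_⟩
    · simp only [Matrix.cons_val_zero, h1, ha, hd, addr_assoc]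
      rw [sup_comm]
      norm_num
    · simp only [Matrix.cons_val_one, Matrix.head_cons, h0, ha, hd, sup_addr, addr_assoc]
      rw [sup_comm, add_right_comm m ((d-a:ℝ):Rb) (A 0 1)]
      norm_num
  · rw [ne_zero_iff] at hvz ⊢
    simpa [WithBot.add_eq_bot, or_comm] using hvz
  · show toE (v 0 + _) - toE (v 1) = _
    rw [E2 _ _ _ ((ne_zero_iff v).1 hvz)]; rfl

lemma deg_row0 (A : Mat2) (h0 : A 0 0 = ⊥) (h1 : A 0 1 = ⊥) :
    PC A ⊆ {⊤} ∧ PR A ⊆ {toE (A 1 1) - toE (A 1 0)} := by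
  constructor
  · rintro z ⟨v, hv, hvz, rfl⟩
    obtain ⟨l, m, hv0, hv1⟩ := (mem_ColSpace A v).1 hv
    have hv0' : v 0 = ⊥ := by simp [hv0, h0, h1]
    have : v 1 ≠ ⊥ := by
      rcases (ne_zero_iff v).1 hvz with h | h
      · exact absurd hv0' h
      · exact h
    show projPt v ∈ _
    rw [Set.mem_singleton_iff, projPt, hv0', toE_bot, ← toE_bot, E3 _ this]
  · rintro z ⟨w, hw, hwz, rfl⟩
    obtain ⟨l, m, hw0, hw1⟩ := (mem_RowSpace A w).1 hw
    have hw0' : w 0 = m + A 1 0 := by simp [hw0, h0]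
    have hw1' : w 1 = m + A 1 1 := by simp [hw1, h1]
    induction m using WithBot.recBotCoe with
    | bot =>
      exfalso
      rcases (ne_zero_iff w).1 hwz with h | h
      · exact h (by simp [hw0'])
      · exact h (by simp [hw1'])
    | coe m =>
      show projPt w ∈ _
      rw [Set.mem_singleton_iff, projPt, hw0', hw1', E0]

lemma deg_row1 (A : Mat2) (h0 : A 1 0 = ⊥) (h1 : A 1 1 = ⊥) :
    PC A ⊆ {⊥} ∧ PR A ⊆ {toE (A 0 1) - toE (A 0 0)} := by
  constructor
  · rintro z ⟨v, hv, hvz, rfl⟩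
    obtain ⟨l, m, hv0, hv1⟩ := (mem_ColSpace A v).1 hv
    have hv1' : v 1 = ⊥ := by simp [hv1, h0, h1]
    show projPt v ∈ _
    rw [Set.mem_singleton_iff, projPt, hv1', E4]
  · rintro z ⟨w, hw, hwz, rfl⟩
    obtain ⟨l, m, hw0, hw1⟩ := (mem_RowSpace A w).1 hw
    have hw0' : w 0 = l + A 0 0 := by simp [hw0, h0]
    have hw1' : w 1 = l + A 0 1 := by simp [hw1, h1]
    induction l using WithBot.recBotCoe with
    | bot =>
      exfalso
      rcases (ne_zero_iff w).1 hwz with h | h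
      · exact h (by simp [hw0'])
      · exact h (by simp [hw1'])
    | coe l =>
      show projPt w ∈ _
      rw [Set.mem_singleton_iff, projPt, hw0', hw1', E0]

lemma row_mem (A : Mat2) (i : Fin 2) : A i ∈ RowSpace A := by
  refine ⟨fun k => if k = i then 0 else ⊥, fun j => ?_⟩
  rw [sup_fin2]
  fin_cases i <;> simp

lemma col_mem (A : Mat2) (j : Fin 2) : (fun i => A i j) ∈ ColSpace A :=
  row_mem (At A) j

lemma nonempty_of (A : Mat2) (i j : Fin 2) (h : A i j ≠ ⊥) :
    (PC A).Nonempty ∧ (PR A).Nonempty := by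
  constructor
  · refine ⟨projPt (fun i => A i j), (fun i => A i j), col_mem A j, ?_, rfl⟩
    rw [ne_zero_iff]
    fin_cases i
    · exact Or.inl h
    · exact Or.inr h
  · refine ⟨projPt (A i), A i, row_mem A i, ?_, rfl⟩
    rw [ne_zero_iff]
    fin_cases j
    · exact Or.inl h
    · exact Or.inr h

lemma empty_of_allbot (A : Mat2) (h : ∀ i j, A i j = ⊥) : PC A = ∅ ∧ PR A = ∅ := by
  constructor
  · rw [Set.eq_empty_iff_forall_notMem]
    rintro z ⟨v, hv, hvz, rfl⟩
    obtain ⟨l, m, h0, h1⟩ := (mem_ColSpace A v).1 hv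
    refine hvz (funext fun i => ?_)
    fin_cases i <;> simp [h0, h1, h 0 0, h 0 1, h 1 0, h 1 1, zeroVec]
  · rw [Set.eq_empty_iff_forall_notMem]
    rintro z ⟨v, hv, hvz, rfl⟩
    obtain ⟨l, m, h0, h1⟩ := (mem_RowSpace A v).1 hv
    refine hvz (funext fun i => ?_)
    fin_cases i <;> simp [h0, h1, h 0 0, h 0 1, h 1 0, h 1 1, zeroVec]

lemma isom_empty : Isom ∅ ∅ := by
  refine ⟨id, ⟨fun x hx => hx, fun x hx => absurd hx (Set.notMem_empty x), ?_⟩,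
    fun x hx => absurd hx (Set.notMem_empty x)⟩
  exact Set.surjOn_empty id ∅

lemma isom_singleton (x y : EReal) : Isom {x} {y} := by
  refine ⟨fun _ => y, ⟨fun z _ => rfl, fun p hp q hq _ => hp.trans hq.symm, ?_⟩, ?_⟩
  · rintro z hz
    exact ⟨x, rfl, hz.symm⟩
  · intro p hp q hq
    rw [Set.mem_singleton_iff] at hp hq
    rw [hp, hq, delta_self, delta_self]

lemma isom_deg (A : Mat2) (x y : EReal) (hM : PC A ⊆ {x}) (hN : PR A ⊆ {y}) :
    Isom (PC A) (PR A) := by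
  by_cases hA : ∀ i j, A i j = ⊥
  · obtain ⟨e1, e2⟩ := empty_of_allbot A hA
    rw [e1, e2]; exact isom_empty
  · push_neg at hA
    obtain ⟨i, j, hij⟩ := hA
    obtain ⟨n1, n2⟩ := nonempty_of A i j hij
    have hMx : PC A = {x} := by
      rcases Set.subset_singleton_iff_eq.1 hM with h | h
      · rw [h] at n1; exact absurd n1 Set.not_nonempty_empty
      · exact h
    have hNy : PR A = {y} := by
      rcases Set.subset_singleton_iff_eq.1 hN with h | h
      · rw [h] at n2; exact absurd n2 Set.not_nonempty_empty
      · exact h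
    rw [hMx, hNy]
    exact isom_singleton x y

lemma isom_of_inv (M N : Set EReal) (f g : EReal → EReal) (hgf : ∀ x, g (f x) = x)
    (hfg : ∀ x, f (g x) = x) (hf : Set.MapsTo f M N) (hg : Set.MapsTo g N M)
    (hδ : ∀ x y, delta (f x) (f y) = delta x y) : Isom M N := by
  refine ⟨f, ⟨hf, fun p _ q _ h => by rw [← hgf p, h, hgf], fun z hz => ⟨g z, hg hz, hfg z⟩⟩,
    fun p _ q _ => hδ p q⟩

/-- for every `2 × 2` tropical matrix, the projective column space and the
projective row space are isometric subsets of `ℝ̂`. -/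
theorem projective_row_col_isometric (A : Mat2) : Isom (PC A) (PR A) := by
  by_cases hbc : A 0 1 ≠ ⊥ ∧ A 1 0 ≠ ⊥
  · obtain ⟨hb', hc'⟩ := hbc
    obtain ⟨b, hb⟩ := WithBot.ne_bot_iff_exists.1 hb'
    obtain ⟨c, hc⟩ := WithBot.ne_bot_iff_exists.1 hc'
    refine isom_of_inv (PC A) (PR A)
      (fun z => z + ((b - c : ℝ):EReal)) (fun z => z + ((c - b : ℝ):EReal))
      (fun x => ?_) (fun x => ?_)
      (mapsTo_trans A b c hb.symm hc.symm)
      (mapsTo_trans (At A) c b hc.symm hb.symm)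
      (fun x y => delta_addr x y _)
    · have h : (c - b : ℝ) = -(b - c) := by ring
      rw [h]; exact inv_addr _ x
    · have h : (b - c : ℝ) = -(c - b) := by ring
      rw [h]; exact inv_addr _ x
  · by_cases had : A 0 0 ≠ ⊥ ∧ A 1 1 ≠ ⊥
    · obtain ⟨ha', hd'⟩ := had
      obtain ⟨a, ha⟩ := WithBot.ne_bot_iff_exists.1 ha'
      obtain ⟨d, hd⟩ := WithBot.ne_bot_iff_exists.1 hd'
      exact isom_of_inv (PC A) (PR A)
        (fun z => ((d - a : ℝ):EReal) - z) (fun z => ((d - a : ℝ):EReal) - z)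
        (fun x => inv_subr _ x) (fun x => inv_subr _ x)
        (mapsTo_refl A a d ha.symm hd.symm)
        (mapsTo_refl (At A) a d ha.symm hd.symm)
        (fun x y => delta_subr x y _)
    · rw [not_and_or, not_ne_iff, not_ne_iff] at hbc had
      rcases hbc with hb | hc <;> rcases had with ha | hd
      · exact isom_deg A ⊤ _ (deg_row0 A ha hb).1 (deg_row0 A ha hb).2
      · exact isom_deg A _ ⊥ (deg_row1 (At A) hb hd).2 (deg_row1 (At A) hb hd).1
      · exact isom_deg A _ ⊤ (deg_row0 (At A) ha hc).2 (deg_row0 (At A) ha hc).1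
      · exact isom_deg A ⊥ _ (deg_row1 A hc hd).1 (deg_row1 A hc hd).2
end

section
/- Let M and N be closed convex subsets of ℝ̂ such that M embeds isometrically into N and N embeds isometrically into M. Then M ≅ N. -/
open scoped Classical ENNReal

/-! A map preserving `δ` sends two distinct reals to reals, since their distance is finite and
nonzero; a point at infinity is at distance `∞` from every real, so it must go to a point at
infinity. Hence mutually embeddable intervals `[x, y]`, `x < y`, contain equally many of `⊥, ⊤`.
With none, both are real intervals whose lengths bound each other, and a translation is an
isometry; with one, both are half-lines, isometric to `[⊥, 0]` by a translation, possibly after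
negation; with two, both are all of `ℝ̂`. A set embedding into a subsingleton is one, and
between subsingletons any injection into a nonempty set is onto. -/

open Set

lemma delta_coe_coe (u v : ℝ) : delta u v = ENNReal.ofReal |u - v| := by
  simp [delta]

lemma delta_coe_eq_top_iff (x : EReal) (u : ℝ) : delta x u = ⊤ ↔ x = ⊥ ∨ x = ⊤ := by
  induction x using EReal.rec <;> simp [delta]

lemma delta_add_coe (x y : EReal) (c : ℝ) : delta (x + c) (y + c) = delta x y := by
  induction x using EReal.rec <;> induction y using EReal.rec <;>
    simp [delta, ← EReal.coe_add, add_sub_add_right_eq_sub]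

lemma delta_neg (x y : EReal) : delta (-x) (-y) = delta x y := by
  induction x using EReal.rec <;> induction y using EReal.rec <;>
    simp [delta, ← EReal.coe_neg, neg_add_eq_sub, abs_sub_comm]

lemma exists_coe_of_delta_ne {p q : EReal} (h0 : delta p q ≠ 0) (htop : delta p q ≠ ⊤) :
    ∃ r s : ℝ, p = r ∧ q = s := by
  unfold delta at h0 htop
  split_ifs at h0 htop with h
  · exact ⟨h.1.choose, h.2.choose, h.1.choose_spec, h.2.choose_spec⟩
  · exact absurd rfl h0
  · exact absurd rfl htop

section Isometric

variable {f : EReal → EReal} {M : Set EReal}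

lemma exists_coe_apply_of_delta (hf : ∀ x ∈ M, ∀ y ∈ M, delta (f x) (f y) = delta x y)
    {u v : ℝ} (huv : u ≠ v) (hu : (u : EReal) ∈ M) (hv : (v : EReal) ∈ M) :
    ∃ p q : ℝ, f u = p ∧ f v = q ∧ |p - q| = |u - v| := by
  have hd := hf _ hu _ hv
  rw [delta_coe_coe] at hd
  obtain ⟨p, q, hp, hq⟩ := exists_coe_of_delta_ne (p := f u) (q := f v)
    (by simpa [hd, sub_eq_zero] using huv) (by simp [hd])
  rw [hp, hq, delta_coe_coe, ENNReal.ofReal_eq_ofReal_iff (abs_nonneg _) (abs_nonneg _)] at hd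
  exact ⟨p, q, hp, hq, hd⟩

lemma mapsTo_infty_of_delta (hf : ∀ x ∈ M, ∀ y ∈ M, delta (f x) (f y) = delta x y)
    {u v : ℝ} (huv : u ≠ v) (hu : (u : EReal) ∈ M) (hv : (v : EReal) ∈ M) :
    MapsTo f (M ∩ {⊥, ⊤}) {⊥, ⊤} := by
  obtain ⟨p, -, hp, -, -⟩ := exists_coe_apply_of_delta hf huv hu hv
  rintro x ⟨hxM, hx⟩
  have hd := hf x hxM u hu
  rw [hp, (delta_coe_eq_top_iff x u).2 hx] at hd
  exact (delta_coe_eq_top_iff _ p).1 hd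

end Isometric

namespace IsomEmbed

variable {M N : Set EReal}

lemma sub_le_sub {a b c d : ℝ} (h : IsomEmbed (Icc (a : EReal) b) (Icc (c : EReal) d))
    (hab : a < b) : b - a ≤ d - c := by
  obtain ⟨f, hmap, -, hf⟩ := h
  have ha : (a : EReal) ∈ Icc (a : EReal) b := left_mem_Icc.2 (EReal.coe_le_coe hab.le)
  have hb : (b : EReal) ∈ Icc (a : EReal) b := right_mem_Icc.2 (EReal.coe_le_coe hab.le)
  obtain ⟨p, q, hp, hq, hpq⟩ := exists_coe_apply_of_delta hf hab.ne ha hb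
  have hpN := hp ▸ hmap ha
  have hqN := hq ▸ hmap hb
  simp only [mem_Icc, EReal.coe_le_coe_iff] at hpN hqN
  rw [abs_sub_comm a, abs_of_pos (sub_pos.2 hab)] at hpq
  exact hpq ▸ abs_sub_le_of_le_of_le hpN.1 hpN.2 hqN.1 hqN.2

lemma ncard_inter_infty_le (h : IsomEmbed M N) {u v : ℝ} (huv : u ≠ v)
    (hu : (u : EReal) ∈ M) (hv : (v : EReal) ∈ M) :
    (M ∩ {⊥, ⊤}).ncard ≤ (N ∩ {⊥, ⊤}).ncard := by
  obtain ⟨f, hmap, hinj, hf⟩ := h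
  exact ncard_le_ncard_of_injOn f
    (fun x hx => ⟨hmap hx.1, mapsTo_infty_of_delta hf huv hu hv hx⟩)
    (hinj.mono inter_subset_left) ((toFinite _).inter_of_right N)

lemma subsingleton (h : IsomEmbed M N) (hN : N.Subsingleton) : M.Subsingleton := by
  obtain ⟨f, hmap, hinj, -⟩ := h
  exact fun x hx y hy => hinj hx hy (hN (hmap hx) (hmap hy))

end IsomEmbed

namespace Isom

variable {M N P : Set EReal}

lemma refl (M : Set EReal) : Isom M M := ⟨id, bijOn_id M, fun _ _ _ _ => rfl⟩

lemma symm (h : Isom M N) : Isom N M := by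
  obtain ⟨f, hbij, hf⟩ := h
  have hinv := hbij.invOn_invFunOn
  have hbij' := hbij.symm hinv.symm
  refine ⟨_, hbij', fun a ha b hb => ?_⟩
  rw [← hf _ (hbij'.mapsTo ha) _ (hbij'.mapsTo hb), hinv.2 ha, hinv.2 hb]

lemma trans (h₁ : Isom M N) (h₂ : Isom N P) : Isom M P := by
  obtain ⟨f, hf, hfd⟩ := h₁
  obtain ⟨g, hg, hgd⟩ := h₂
  exact ⟨g ∘ f, hg.comp hf, fun x hx y hy =>
    (hgd _ (hf.mapsTo hx) _ (hf.mapsTo hy)).trans (hfd x hx y hy)⟩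

lemma of_isomEmbed_of_subsingleton (hMN : IsomEmbed M N) (hNM : IsomEmbed N M)
    (hN : N.Subsingleton) : Isom M N := by
  obtain ⟨f, hmap, hinj, hf⟩ := hMN
  obtain ⟨g, hgmap, -, -⟩ := hNM
  exact ⟨f, ⟨hmap, hinj, fun y hy => ⟨g y, hgmap hy, hN (hmap (hgmap hy)) hy⟩⟩, hf⟩

end Isom

lemma isom_Icc_add_coe (x y : EReal) (c : ℝ) : Isom (Icc x y) (Icc (x + c) (y + c)) := by
  refine ⟨(· + c), InvOn.bijOn (f' := (· - c))
    ⟨fun z _ => EReal.add_sub_cancel_right, fun z _ => EReal.sub_add_cancel⟩ ?_ ?_,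
    fun a _ b _ => delta_add_coe a b c⟩
  · exact fun z hz => ⟨add_le_add_left hz.1 _, add_le_add_left hz.2 _⟩
  · intro z hz
    have h₁ := EReal.sub_le_sub hz.1 (le_refl (c : EReal))
    have h₂ := EReal.sub_le_sub hz.2 (le_refl (c : EReal))
    rw [EReal.add_sub_cancel_right] at h₁ h₂
    exact ⟨h₁, h₂⟩

lemma isom_Icc_coe_of_sub_eq {a b c d : ℝ} (h : b - a = d - c) :
    Isom (Icc (a : EReal) b) (Icc (c : EReal) d) := by
  convert isom_Icc_add_coe a b (c - a) using 2 <;> norm_cast <;> linarith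

lemma mapsTo_neg_Icc (x y : EReal) : MapsTo Neg.neg (Icc x y) (Icc (-y) (-x)) :=
  fun _ hz => ⟨EReal.neg_le_neg_iff.2 hz.2, EReal.neg_le_neg_iff.2 hz.1⟩

lemma isom_Icc_neg (x y : EReal) : Isom (Icc x y) (Icc (-y) (-x)) :=
  ⟨Neg.neg, InvOn.bijOn (f' := Neg.neg) ⟨fun z _ => neg_neg z, fun z _ => neg_neg z⟩
    (mapsTo_neg_Icc x y) (by simpa using mapsTo_neg_Icc (-y) (-x)),
    fun a _ b _ => delta_neg a b⟩

lemma IsClosedConvex.exists_lt_and_eq_Icc {S : Set EReal} (hS : IsClosedConvex S)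
    (hS' : ¬S.Subsingleton) : ∃ x y, x < y ∧ S = Icc x y := by
  rcases hS with rfl | ⟨x, y, hxy, rfl⟩
  · exact absurd subsingleton_empty hS'
  · refine ⟨x, y, hxy.lt_of_ne ?_, rfl⟩
    rintro rfl
    exact hS' (by simp)

lemma exists_coe_ne_mem_Icc {x y : EReal} (hxy : x < y) :
    ∃ u v : ℝ, u ≠ v ∧ (u : EReal) ∈ Icc x y ∧ (v : EReal) ∈ Icc x y := by
  obtain ⟨v, hxv, hvy⟩ := EReal.lt_iff_exists_real_btwn.1 hxy
  obtain ⟨u, hxu, huv⟩ := EReal.lt_iff_exists_real_btwn.1 hxv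
  exact ⟨u, v, (EReal.coe_lt_coe_iff.1 huv).ne, ⟨hxu.le, huv.le.trans hvy.le⟩,
    ⟨hxv.le, hvy.le⟩⟩

section Icc

variable {x y : EReal}

lemma bot_mem_Icc_iff : ⊥ ∈ Icc x y ↔ x = ⊥ := by simp

lemma top_mem_Icc_iff : ⊤ ∈ Icc x y ↔ y = ⊤ := by simp

lemma exists_coe_of_ncard_Icc_inter_eq_zero (hxy : x < y)
    (h : (Icc x y ∩ {⊥, ⊤}).ncard = 0) : ∃ a b : ℝ, x = a ∧ y = b := by
  rw [ncard_eq_zero ((toFinite _).inter_of_right _), eq_empty_iff_forall_notMem] at h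
  have hx : x ≠ ⊥ := fun hx => h ⊥ ⟨bot_mem_Icc_iff.2 hx, by simp⟩
  have hy : y ≠ ⊤ := fun hy => h ⊤ ⟨top_mem_Icc_iff.2 hy, by simp⟩
  lift x to ℝ using ⟨hxy.ne_top, hx⟩
  lift y to ℝ using ⟨hy, hxy.ne_bot⟩
  exact ⟨x, y, rfl, rfl⟩

lemma eq_bot_and_eq_top_of_ncard_Icc_inter_eq_two (h : (Icc x y ∩ {⊥, ⊤}).ncard = 2) :
    x = ⊥ ∧ y = ⊤ := by
  have hsub : {⊥, ⊤} ⊆ Icc x y := by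
    rw [← eq_of_subset_of_ncard_le (inter_subset_right : Icc x y ∩ {⊥, ⊤} ⊆ _)
      (by rw [h, ncard_pair bot_ne_top])]
    exact inter_subset_left
  exact ⟨bot_mem_Icc_iff.1 (hsub (by simp)), top_mem_Icc_iff.1 (hsub (by simp))⟩

lemma isom_Icc_bot_zero_of_ncard_Icc_inter_eq_one (hxy : x < y)
    (h : (Icc x y ∩ {⊥, ⊤}).ncard = 1) : Isom (Icc x y) (Icc ⊥ 0) := by
  obtain ⟨e, he⟩ := ncard_eq_one.1 h
  have hmem : ∀ p ∈ ({⊥, ⊤} : Set EReal), p ∈ Icc x y → p = e := fun p hp hpI =>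
    mem_singleton_iff.1 (he ▸ ⟨hpI, hp⟩)
  rcases (he ▸ mem_singleton e : e ∈ Icc x y ∩ {⊥, ⊤}) with ⟨heI, rfl | rfl⟩
  · have hy : y ≠ ⊤ := fun hy => bot_ne_top (hmem ⊤ (by simp) (top_mem_Icc_iff.2 hy)).symm
    obtain rfl := bot_mem_Icc_iff.1 heI
    lift y to ℝ using ⟨hy, hxy.ne_bot⟩
    simpa [← EReal.coe_neg, ← EReal.coe_add] using isom_Icc_add_coe ⊥ y (-y)
  · have hx : x ≠ ⊥ := fun hx => bot_ne_top (hmem ⊥ (by simp) (bot_mem_Icc_iff.2 hx))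
    obtain rfl := top_mem_Icc_iff.1 heI
    lift x to ℝ using ⟨hxy.ne_top, hx⟩
    simpa [← EReal.coe_neg, ← EReal.coe_add] using
      (isom_Icc_neg x ⊤).trans (isom_Icc_add_coe _ _ x)

end Icc

/-- isometric embedding is antisymmetric on closed convex subsets of `ℝ̂`:
if two closed convex sets embed isometrically into each other then they are isometric. -/
theorem isomEmbed_antisymm (M N : Set EReal)
    (hM : IsClosedConvex M) (hN : IsClosedConvex N)
    (hMN : IsomEmbed M N) (hNM : IsomEmbed N M) : Isom M N := by
  by_cases hMs : M.Subsingleton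
  · exact .of_isomEmbed_of_subsingleton hMN hNM (hNM.subsingleton hMs)
  by_cases hNs : N.Subsingleton
  · exact .of_isomEmbed_of_subsingleton hMN hNM hNs
  obtain ⟨x, y, hxy, rfl⟩ := hM.exists_lt_and_eq_Icc hMs
  obtain ⟨z, w, hzw, rfl⟩ := hN.exists_lt_and_eq_Icc hNs
  obtain ⟨u, v, huv, hu, hv⟩ := exists_coe_ne_mem_Icc hxy
  obtain ⟨u', v', huv', hu', hv'⟩ := exists_coe_ne_mem_Icc hzw
  have hcard := le_antisymm (hMN.ncard_inter_infty_le huv hu hv)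
    (hNM.ncard_inter_infty_le huv' hu' hv')
  have hle : (Icc x y ∩ {⊥, ⊤}).ncard ≤ 2 :=
    (ncard_le_ncard inter_subset_right (toFinite _)).trans (ncard_pair bot_ne_top).le
  interval_cases hk : (Icc x y ∩ {⊥, ⊤}).ncard
  · obtain ⟨a, b, rfl, rfl⟩ := exists_coe_of_ncard_Icc_inter_eq_zero hxy hk
    obtain ⟨c, d, rfl, rfl⟩ := exists_coe_of_ncard_Icc_inter_eq_zero hzw hcard.symm
    exact isom_Icc_coe_of_sub_eq <| le_antisymm
      (hMN.sub_le_sub (EReal.coe_lt_coe_iff.1 hxy)) (hNM.sub_le_sub (EReal.coe_lt_coe_iff.1 hzw))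
  · exact (isom_Icc_bot_zero_of_ncard_Icc_inter_eq_one hxy hk).trans
      (isom_Icc_bot_zero_of_ncard_Icc_inter_eq_one hzw hcard.symm).symm
  · obtain ⟨rfl, rfl⟩ := eq_bot_and_eq_top_of_ncard_Icc_inter_eq_two hk
    obtain ⟨rfl, rfl⟩ := eq_bot_and_eq_top_of_ncard_Icc_inter_eq_two hcard.symm
    exact .refl _
end

section
/- The two-sided ideals of M₂(ℝ̄) are totally ordered under inclusion: for any two ideals I and J of M₂(ℝ̄), either I ⊆ J or J ⊆ I. -/
open scoped Classical ENNReal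

/-- An ideal of the monoid of `2 × 2` tropical matrices. -/
noncomputable def IsIdeal (I : Set Mat2) : Prop :=
  I.Nonempty ∧ ∀ A ∈ I, ∀ X Y : Mat2, tMul (tMul X A) Y ∈ I

/-!
Matrices of the form `c i + r j` (tropical rank at most one, the zero matrix included) lie in
the ideal generated by any nonzero matrix. Any other `2 × 2` matrix can be brought, by
permuting and shifting its rows and columns, to the identity (so it generates the whole monoid)
or to `[[0, 0], [0, t]]` with `t ≤ 0`, possibly `t = -∞`: put the smaller of the two sums
`M₀₀ + M₁₁`, `M₀₁ + M₁₀` on the diagonal and normalise the three remaining entries to `0`.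
Since `[[0, -∞], [s, 0]] ⊗ [[0, 0], [0, t]] = [[0, 0], [0, s]]` for `t ≤ s ≤ 0`, these normal
forms, and hence all principal ideals, form a chain.
-/

section

variable {n : ℕ}

lemma add_finset_sup {ι : Type*} (a : Rb) (s : Finset ι) (f : ι → Rb) :
    a + s.sup f = s.sup fun i => a + f i :=
  Finset.apply_sup_eq_sup_comp_of_linearOrder (a + ·) add_right_mono (WithBot.add_bot a)

lemma finset_sup_add {ι : Type*} (s : Finset ι) (f : ι → Rb) (a : Rb) :
    s.sup f + a = s.sup fun i => f i + a := by
  simpa only [add_comm _ a] using add_finset_sup a s f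

lemma tMul_assoc (A B C : Fin n → Fin n → Rb) : tMul (tMul A B) C = tMul A (tMul B C) := by
  ext i j
  simp only [tMul, finset_sup_add, add_finset_sup, add_assoc]
  exact Finset.sup_comm _ _ _

lemma tMul_monomial_left (f : Fin n → Fin n) (c : Fin n → Rb) (A : Fin n → Fin n → Rb) :
    tMul (fun i k => if k = f i then c i else ⊥) A = fun i j => c i + A (f i) j := by
  ext i j
  simp [tMul, ite_add, Finset.sup_ite, Finset.filter_eq']

lemma tMul_monomial_right (g : Fin n → Fin n) (r : Fin n → Rb) (A : Fin n → Fin n → Rb) :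
    tMul A (fun l j => if l = g j then r j else ⊥) = fun i j => A i (g j) + r j := by
  ext i j
  simp [tMul, add_ite, Finset.sup_ite, Finset.filter_eq']

def tOne : Fin n → Fin n → Rb := fun i j => if j = i then 0 else ⊥

lemma tMul_tOne (A : Fin n → Fin n → Rb) : tMul A tOne = A := by
  have h := tMul_monomial_right id 0 A
  simp only [id, Pi.zero_apply, add_zero] at h
  convert h using 2
  ext l j
  simp only [tOne, eq_comm]

/-- Green's preorder `A ≤𝒥 B`: `A` lies in the two-sided ideal generated by `B`. -/
def JLe (A B : Fin n → Fin n → Rb) : Prop := ∃ X Y, tMul (tMul X B) Y = A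

lemma JLe.trans {A B C : Fin n → Fin n → Rb} (hAB : JLe A B) (hBC : JLe B C) : JLe A C := by
  obtain ⟨X, Y, rfl⟩ := hAB
  obtain ⟨X', Y', rfl⟩ := hBC
  exact ⟨tMul X X', tMul Y' Y, by simp only [tMul_assoc]⟩

lemma jLe_tOne (A : Fin n → Fin n → Rb) : JLe A tOne :=
  ⟨A, tOne, by rw [tMul_tOne, tMul_tOne]⟩

def IsRankLeOne (A : Fin n → Fin n → Rb) : Prop := ∃ c r : Fin n → Rb, A = fun i j => c i + r j

lemma IsRankLeOne.jLe {A B : Fin n → Fin n → Rb} (hA : IsRankLeOne A) {p q : Fin n}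
    (hpq : B p q ≠ ⊥) : JLe A B := by
  obtain ⟨c, r, rfl⟩ := hA
  obtain ⟨b, hb⟩ := WithBot.ne_bot_iff_exists.1 hpq
  refine ⟨fun i k => if k = p then c i + ↑(-b) else ⊥, fun l j => if l = q then r j else ⊥, ?_⟩
  rw [tMul_monomial_left (fun _ => p), tMul_monomial_right (fun _ => q), ← hb]
  ext i j
  rw [add_assoc (c i), ← WithBot.coe_add, neg_add_cancel, WithBot.coe_zero, add_zero]

lemma IsRankLeOne.jLe_total {A : Fin n → Fin n → Rb} (hA : IsRankLeOne A)
    (B : Fin n → Fin n → Rb) : JLe A B ∨ JLe B A := by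
  by_cases hB : ∃ p q, B p q ≠ ⊥
  · obtain ⟨p, q, hpq⟩ := hB
    exact Or.inl (hA.jLe hpq)
  · push Not at hB
    exact Or.inr ⟨fun _ _ => ⊥, fun _ _ => ⊥, by ext i j; simp [tMul, hB]⟩

def rescale (σ τ : Equiv.Perm (Fin n)) (u v : Fin n → ℝ) (A : Fin n → Fin n → Rb) :
    Fin n → Fin n → Rb :=
  fun i j => ↑(u i) + A (σ i) (τ j) + ↑(v j)

lemma rescale_jLe (σ τ : Equiv.Perm (Fin n)) (u v : Fin n → ℝ) (A : Fin n → Fin n → Rb) :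
    JLe (rescale σ τ u v A) A := by
  refine ⟨fun i k => if k = σ i then ↑(u i) else ⊥, fun l j => if l = τ j then ↑(v j) else ⊥, ?_⟩
  rw [tMul_monomial_left, tMul_monomial_right]
  rfl

lemma rescale_symm_rescale (σ τ : Equiv.Perm (Fin n)) (u v : Fin n → ℝ)
    (A : Fin n → Fin n → Rb) :
    rescale σ.symm τ.symm (fun i => -u (σ.symm i)) (fun j => -v (τ.symm j))
      (rescale σ τ u v A) = A := by
  ext i j
  simp only [rescale, Equiv.apply_symm_apply]
  induction A i j using WithBot.recBotCoe
  · simp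
  · norm_cast
    ring

lemma jLe_rescale (σ τ : Equiv.Perm (Fin n)) (u v : Fin n → ℝ) (A : Fin n → Fin n → Rb) :
    JLe A (rescale σ τ u v A) := by
  have h := rescale_jLe σ.symm τ.symm (fun i => -u (σ.symm i)) (fun j => -v (τ.symm j))
    (rescale σ τ u v A)
  rwa [rescale_symm_rescale] at h

def JEquiv (A B : Fin n → Fin n → Rb) : Prop := JLe A B ∧ JLe B A

lemma JEquiv.trans {A B C : Fin n → Fin n → Rb} (hAB : JEquiv A B) (hBC : JEquiv B C) :
    JEquiv A C :=
  ⟨hAB.1.trans hBC.1, hBC.2.trans hAB.2⟩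

lemma jEquiv_rescale (σ τ : Equiv.Perm (Fin n)) (u v : Fin n → ℝ) (A : Fin n → Fin n → Rb) :
    JEquiv A (rescale σ τ u v A) :=
  ⟨jLe_rescale σ τ u v A, rescale_jLe σ τ u v A⟩

end

lemma tMul_fin_two_apply (A B : Mat2) (i j : Fin 2) :
    tMul A B i j = (A i 0 + B 0 j) ⊔ (A i 1 + B 1 j) := by
  simp [tMul, Fin.univ_succ]

def cornerMat (t : Rb) : Mat2 := ![![0, 0], ![0, t]]

lemma cornerMat_jLe_cornerMat {s t : Rb} (hts : t ≤ s) (hs : s ≤ 0) :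
    JLe (cornerMat s) (cornerMat t) := by
  refine ⟨![![0, ⊥], ![s, 0]], tOne, ?_⟩
  rw [tMul_tOne]
  ext i j
  fin_cases i <;> fin_cases j <;> simp [tMul_fin_two_apply, cornerMat, hs, hts]

lemma isRankLeOne_of_diag_eq {M : Mat2} (h : M 0 0 + M 1 1 = M 0 1 + M 1 0) :
    IsRankLeOne M := by
  by_cases hbot : M 0 1 + M 1 0 = ⊥
  · rw [hbot, WithBot.add_eq_bot] at h
    rw [WithBot.add_eq_bot] at hbot
    rcases h with h00 | h11 <;> rcases hbot with h01 | h10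
    · exact ⟨![⊥, 0], M 1, by ext i j; fin_cases i <;> fin_cases j <;> simp [h00, h01]⟩
    · exact ⟨(M · 1), ![⊥, 0], by ext i j; fin_cases i <;> fin_cases j <;> simp [h00, h10]⟩
    · exact ⟨(M · 0), ![0, ⊥], by ext i j; fin_cases i <;> fin_cases j <;> simp [h11, h01]⟩
    · exact ⟨![0, ⊥], M 0, by ext i j; fin_cases i <;> fin_cases j <;> simp [h11, h10]⟩
  · obtain ⟨hb, hc⟩ := WithBot.add_ne_bot.1 hbot
    obtain ⟨ha, hd⟩ := WithBot.add_ne_bot.1 (h ▸ hbot)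
    obtain ⟨a, ha⟩ := WithBot.ne_bot_iff_exists.1 ha
    obtain ⟨b, hb⟩ := WithBot.ne_bot_iff_exists.1 hb
    obtain ⟨c, hc⟩ := WithBot.ne_bot_iff_exists.1 hc
    obtain ⟨d, hd⟩ := WithBot.ne_bot_iff_exists.1 hd
    rw [← ha, ← hb, ← hc, ← hd] at h
    norm_cast at h
    refine ⟨![0, ↑(c - a)], ![↑a, ↑b], ?_⟩
    ext i j
    fin_cases i <;> fin_cases j <;> simp [← ha, ← hb, ← hc, ← hd] <;> norm_cast <;> linarith

lemma rescale_eq_cornerMat {M : Mat2} (σ τ : Equiv.Perm (Fin 2)) {a b c : ℝ}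
    (ha : M (σ 0) (τ 0) = a) (hb : M (σ 0) (τ 1) = b) (hc : M (σ 1) (τ 0) = c) :
    rescale σ τ ![0, a - c] ![-a, -b] M = cornerMat (M (σ 1) (τ 1) + ↑(a - b - c)) := by
  have h11 (x : Rb) : ↑(a - c) + x + ↑(-b) = x + ↑(a - b - c) := by
    induction x using WithBot.recBotCoe
    · simp
    · norm_cast
      ring
  ext i j
  fin_cases i <;> fin_cases j <;> simp [rescale, cornerMat, ha, hb, hc, h11] <;> norm_cast <;> ring

lemma tOne_jLe_or_jEquiv_cornerMat_of_diag_lt {M : Mat2} (h : M 0 0 + M 1 1 < M 0 1 + M 1 0) :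
    JLe tOne M ∨ ∃ t ≤ 0, JEquiv M (cornerMat t) := by
  obtain ⟨hb, hc⟩ := WithBot.add_ne_bot.1 (bot_le.trans_lt h).ne'
  obtain ⟨b, hb⟩ := WithBot.ne_bot_iff_exists.1 hb
  obtain ⟨c, hc⟩ := WithBot.ne_bot_iff_exists.1 hc
  by_cases ha : M 0 0 = ⊥
  · by_cases hd : M 1 1 = ⊥
    · left
      have hM : rescale 1 (Equiv.swap 0 1) 0 ![-b, -c] M = tOne := by
        ext i j
        fin_cases i <;> fin_cases j <;> simp [rescale, tOne, ha, hd, ← hb, ← hc] <;>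
          norm_cast <;> simp
      simpa only [hM] using rescale_jLe 1 (Equiv.swap 0 1) 0 ![-b, -c] M
    · right
      -- swapping both the rows and the columns moves the `-∞` entry to position `(1, 1)`
      obtain ⟨d, hd⟩ := WithBot.ne_bot_iff_exists.1 hd
      have hM := rescale_eq_cornerMat (M := M) (Equiv.swap 0 1) (Equiv.swap 0 1)
        (a := d) (b := c) (c := b) (by simpa using hd.symm) (by simpa using hc.symm)
        (by simpa using hb.symm)
      refine ⟨_, ?_, hM ▸ jEquiv_rescale _ _ _ _ M⟩
      simp [ha]
  · right
    obtain ⟨a, ha⟩ := WithBot.ne_bot_iff_exists.1 ha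
    have hM := rescale_eq_cornerMat (M := M) 1 1 ha.symm hb.symm hc.symm
    refine ⟨_, ?_, hM ▸ jEquiv_rescale _ _ _ _ M⟩
    rw [← ha, ← hb, ← hc] at h
    simp only [Equiv.Perm.coe_one, id]
    generalize M 1 1 = d at h ⊢
    induction d using WithBot.recBotCoe
    · simp
    · norm_cast at h ⊢
      linarith

lemma isRankLeOne_or_tOne_jLe_or_jEquiv_cornerMat (M : Mat2) :
    IsRankLeOne M ∨ JLe tOne M ∨ ∃ t ≤ 0, JEquiv M (cornerMat t) := by
  rcases lt_trichotomy (M 0 0 + M 1 1) (M 0 1 + M 1 0) with h | h | h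
  · exact Or.inr (tOne_jLe_or_jEquiv_cornerMat_of_diag_lt h)
  · exact Or.inl (isRankLeOne_of_diag_eq h)
  · right
    have hM := jEquiv_rescale 1 (Equiv.swap 0 1) 0 0 M
    set M' := rescale 1 (Equiv.swap 0 1) 0 0 M
    have h' : M' 0 0 + M' 1 1 < M' 0 1 + M' 1 0 := by simpa [M', rescale, add_comm] using h
    rcases tOne_jLe_or_jEquiv_cornerMat_of_diag_lt h' with hM' | ⟨t, ht, hM'⟩
    · exact Or.inl (hM'.trans hM.2)
    · exact Or.inr ⟨t, ht, hM.trans hM'⟩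

theorem jLe_total (A B : Mat2) : JLe A B ∨ JLe B A := by
  rcases isRankLeOne_or_tOne_jLe_or_jEquiv_cornerMat A with hA | hA | ⟨t, ht, hA⟩
  · exact hA.jLe_total B
  · exact Or.inr ((jLe_tOne B).trans hA)
  rcases isRankLeOne_or_tOne_jLe_or_jEquiv_cornerMat B with hB | hB | ⟨s, hs, hB⟩
  · exact (hB.jLe_total A).symm
  · exact Or.inl ((jLe_tOne A).trans hB)
  rcases le_total t s with hts | hst
  · exact Or.inr (hB.1.trans ((cornerMat_jLe_cornerMat hts hs).trans hA.2))
  · exact Or.inl (hA.1.trans ((cornerMat_jLe_cornerMat hst ht).trans hB.2))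

lemma IsIdeal.mem_of_jLe {I : Set Mat2} (hI : IsIdeal I) {A B : Mat2} (hB : B ∈ I)
    (hAB : JLe A B) : A ∈ I := by
  obtain ⟨X, Y, rfl⟩ := hAB
  exact hI.2 B hB X Y

/-- the two-sided ideals of `M₂(ℝ̄)` are totally ordered by inclusion. -/
theorem ideals_totally_ordered (I J : Set Mat2) (hI : IsIdeal I) (hJ : IsIdeal J) :
    I ⊆ J ∨ J ⊆ I := by
  rw [or_iff_not_imp_left, Set.not_subset]
  rintro ⟨A, hAI, hAJ⟩ B hBJ
  rcases jLe_total A B with hAB | hBA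
  · exact absurd (hJ.mem_of_jLe hBJ hAB) hAJ
  · exact hI.mem_of_jLe hAI hBA
end
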